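/- arXiv:1904.08046 — 3 statements merged into one kernel-verified Lean document; each statement's English description precedes it below -/
import Mathlib

section
/- Let D ⊆ ℝ² be open and φ : D → ℝ a C^2 function satisfying the minimal surface equation (1 + φ_y²)φ_xx − 2φ_xφ_yφ_xy + (1 + φ_x²)φ_yy = 0, and suppose ψ : D → ℝ is C^2 with ψ_x = −φ_y/√(φ_x²+φ_y²+1) and ψ_y = φ_x/√(φ_x²+φ_y²+1). Then ψ satisfies the zero mean curvature equation (1 − ψ_y²)ψ_xx + 2ψ_xψ_yψ_xy + (1 − ψ_x²)ψ_yy = 0 and moreover 1 − ψ_x² − ψ_y² = 1/(φ_x²+φ_y²+1) > 0, so the graph of ψ is space-like (a maximal surface). -/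
/-- Partial derivative in the first variable of a function on ℝ². -/
noncomputable def pdx (f : ℝ × ℝ → ℝ) (p : ℝ × ℝ) : ℝ := deriv (fun t => f (t, p.2)) p.1
/-- Partial derivative in the second variable of a function on ℝ². -/
noncomputable def pdy (f : ℝ × ℝ → ℝ) (p : ℝ × ℝ) : ℝ := deriv (fun t => f (p.1, t)) p.2

/-!
Write u = φ_x, v = φ_y and W = √(u² + v² + 1). The hypotheses say ∇ψ = (-v, u) / W, which gives
1 - |∇ψ|² = 1 / W² > 0 at once. Differentiating ψ_x and ψ_y by the quotient rule and using
φ_xy = φ_yx yields the pointwise identity W⁵ · ZMC(ψ) = u v · MSE(φ), so the zero mean curvature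
equation for ψ follows from the minimal surface equation for φ.
-/

open Filter Topology

variable {f g : ℝ × ℝ → ℝ} {f' : ℝ × ℝ →L[ℝ] ℝ} {p : ℝ × ℝ}

lemma HasFDerivAt.hasDerivAt_pdx (h : HasFDerivAt f f' p) :
    HasDerivAt (fun t => f (t, p.2)) (f' (1, 0)) p.1 :=
  h.comp_hasDerivAt p.1 ((hasDerivAt_id p.1).prodMk (hasDerivAt_const p.1 p.2))

lemma HasFDerivAt.hasDerivAt_pdy (h : HasFDerivAt f f' p) :
    HasDerivAt (fun t => f (p.1, t)) (f' (0, 1)) p.2 :=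
  h.comp_hasDerivAt p.2 ((hasDerivAt_const p.2 p.1).prodMk (hasDerivAt_id p.2))

lemma HasFDerivAt.pdx_eq (h : HasFDerivAt f f' p) : pdx f p = f' (1, 0) :=
  h.hasDerivAt_pdx.deriv

lemma HasFDerivAt.pdy_eq (h : HasFDerivAt f f' p) : pdy f p = f' (0, 1) :=
  h.hasDerivAt_pdy.deriv

lemma DifferentiableAt.hasDerivAt_pdx (h : DifferentiableAt ℝ f p) :
    HasDerivAt (fun t => f (t, p.2)) (pdx f p) p.1 := by
  rw [h.hasFDerivAt.pdx_eq]
  exact h.hasFDerivAt.hasDerivAt_pdx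

lemma DifferentiableAt.hasDerivAt_pdy (h : DifferentiableAt ℝ f p) :
    HasDerivAt (fun t => f (p.1, t)) (pdy f p) p.2 := by
  rw [h.hasFDerivAt.pdy_eq]
  exact h.hasFDerivAt.hasDerivAt_pdy

lemma Filter.EventuallyEq.pdx_eq (h : f =ᶠ[𝓝 p] g) : pdx f p = pdx g p :=
  (h.comp_tendsto ((Continuous.prodMk_left p.2).tendsto p.1)).deriv_eq

lemma Filter.EventuallyEq.pdy_eq (h : f =ᶠ[𝓝 p] g) : pdy f p = pdy g p :=
  (h.comp_tendsto ((Continuous.prodMk_right p.1).tendsto p.2)).deriv_eq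

lemma pdx_neg : pdx (fun q => -f q) p = -pdx f p := deriv.neg

lemma pdy_neg : pdy (fun q => -f q) p = -pdy f p := deriv.neg

lemma HasDerivAt.div_sqrt_sq_add_sq_add_one {f u v : ℝ → ℝ} {f' u' v' t : ℝ}
    (hf : HasDerivAt f f' t) (hu : HasDerivAt u u' t) (hv : HasDerivAt v v' t) :
    HasDerivAt (fun s => f s / √(u s ^ 2 + v s ^ 2 + 1))
      (f' / √(u t ^ 2 + v t ^ 2 + 1)
        - f t * (u t * u' + v t * v') / √(u t ^ 2 + v t ^ 2 + 1) ^ 3) t := by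
  have hS : 0 < u t ^ 2 + v t ^ 2 + 1 := by positivity
  have hS' : HasDerivAt (fun s => u s ^ 2 + v s ^ 2 + 1) (2 * (u t * u' + v t * v')) t :=
    (((hu.fun_pow 2).fun_add (hv.fun_pow 2)).add_const 1).congr_deriv (by ring)
  have hW0 : √(u t ^ 2 + v t ^ 2 + 1) ≠ 0 := (Real.sqrt_pos.2 hS).ne'
  refine (hf.fun_div (hS'.sqrt hS.ne') hW0).congr_deriv ?_
  field_simp

variable {u v : ℝ × ℝ → ℝ}

lemma pdx_div_sqrt_sq_add_sq_add_one (hf : DifferentiableAt ℝ f p)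
    (hu : DifferentiableAt ℝ u p) (hv : DifferentiableAt ℝ v p) :
    pdx (fun q => f q / √(u q ^ 2 + v q ^ 2 + 1)) p
      = pdx f p / √(u p ^ 2 + v p ^ 2 + 1)
        - f p * (u p * pdx u p + v p * pdx v p) / √(u p ^ 2 + v p ^ 2 + 1) ^ 3 :=
  (hf.hasDerivAt_pdx.div_sqrt_sq_add_sq_add_one hu.hasDerivAt_pdx hv.hasDerivAt_pdx).deriv

lemma pdy_div_sqrt_sq_add_sq_add_one (hf : DifferentiableAt ℝ f p)
    (hu : DifferentiableAt ℝ u p) (hv : DifferentiableAt ℝ v p) :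
    pdy (fun q => f q / √(u q ^ 2 + v q ^ 2 + 1)) p
      = pdy f p / √(u p ^ 2 + v p ^ 2 + 1)
        - f p * (u p * pdy u p + v p * pdy v p) / √(u p ^ 2 + v p ^ 2 + 1) ^ 3 :=
  (hf.hasDerivAt_pdy.div_sqrt_sq_add_sq_add_one hu.hasDerivAt_pdy hv.hasDerivAt_pdy).deriv

lemma ContDiffAt.hasFDerivAt_pdx (h : ContDiffAt ℝ 2 f p) :
    HasFDerivAt (pdx f) ((fderiv ℝ (fderiv ℝ f) p).flip (1, 0)) p := by
  have hpdx : pdx f =ᶠ[𝓝 p] fun q => fderiv ℝ f q (1, 0) := by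
    filter_upwards [h.eventually (by simp)] with q hq
    exact (hq.differentiableAt (by simp)).hasFDerivAt.pdx_eq
  have h' := ((h.fderiv_right le_rfl).differentiableAt one_ne_zero).hasFDerivAt
  simpa using (h'.clm_apply (hasFDerivAt_const (1, 0) p)).congr_of_eventuallyEq hpdx

lemma ContDiffAt.hasFDerivAt_pdy (h : ContDiffAt ℝ 2 f p) :
    HasFDerivAt (pdy f) ((fderiv ℝ (fderiv ℝ f) p).flip (0, 1)) p := by
  have hpdy : pdy f =ᶠ[𝓝 p] fun q => fderiv ℝ f q (0, 1) := by
    filter_upwards [h.eventually (by simp)] with q hq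
    exact (hq.differentiableAt (by simp)).hasFDerivAt.pdy_eq
  have h' := ((h.fderiv_right le_rfl).differentiableAt one_ne_zero).hasFDerivAt
  simpa using (h'.clm_apply (hasFDerivAt_const (0, 1) p)).congr_of_eventuallyEq hpdy

lemma ContDiffAt.pdx_pdy_comm (h : ContDiffAt ℝ 2 f p) : pdx (pdy f) p = pdy (pdx f) p := by
  rw [h.hasFDerivAt_pdy.pdx_eq, h.hasFDerivAt_pdx.pdy_eq]
  exact h.isSymmSndFDerivAt (by simp) _ _

lemma zmc_expr_eq_mul_mse_expr {u v W : ℝ} (hW : W ^ 2 = u ^ 2 + v ^ 2 + 1) (a b c : ℝ) :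
    (1 - (u / W) ^ 2) * (-b / W - -v * (u * a + v * b) / W ^ 3)
      + 2 * (-v / W) * (u / W) * (-c / W - -v * (u * b + v * c) / W ^ 3)
      + (1 - (-v / W) ^ 2) * (b / W - u * (u * b + v * c) / W ^ 3)
      = u * v * ((1 + v ^ 2) * a - 2 * u * v * b + (1 + u ^ 2) * c) / W ^ 5 := by
  have hW0 : W ≠ 0 := by rintro rfl; nlinarith
  field_simp
  linear_combination u * v * (a + c) * hW

lemma one_sub_sq_div_sub_sq_div {u v W : ℝ} (hW : W ^ 2 = u ^ 2 + v ^ 2 + 1) :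
    1 - (-v / W) ^ 2 - (u / W) ^ 2 = 1 / (u ^ 2 + v ^ 2 + 1) := by
  have hW0 : W ≠ 0 := by rintro rfl; nlinarith
  rw [← hW]
  field_simp
  linear_combination hW

theorem stmt_4_general (D : Set (ℝ × ℝ)) (hD : IsOpen D) (φ ψ : ℝ × ℝ → ℝ)
    (hφ : ContDiffOn ℝ 2 φ D)
    (hmin : ∀ p ∈ D,
      (1 + (pdy φ p) ^ 2) * pdx (pdx φ) p
        - 2 * pdx φ p * pdy φ p * pdy (pdx φ) p
        + (1 + (pdx φ p) ^ 2) * pdy (pdy φ) p = 0)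
    (hdx : ∀ p ∈ D, pdx ψ p = -(pdy φ p) / Real.sqrt ((pdx φ p) ^ 2 + (pdy φ p) ^ 2 + 1))
    (hdy : ∀ p ∈ D, pdy ψ p = pdx φ p / Real.sqrt ((pdx φ p) ^ 2 + (pdy φ p) ^ 2 + 1)) :
    ∀ p ∈ D,
      ((1 - (pdy ψ p) ^ 2) * pdx (pdx ψ) p
        + 2 * pdx ψ p * pdy ψ p * pdy (pdx ψ) p
        + (1 - (pdx ψ p) ^ 2) * pdy (pdy ψ) p = 0) ∧
      (1 - (pdx ψ p) ^ 2 - (pdy ψ p) ^ 2 = 1 / ((pdx φ p) ^ 2 + (pdy φ p) ^ 2 + 1)) ∧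
      (0 < 1 - (pdx ψ p) ^ 2 - (pdy ψ p) ^ 2) := by
  intro p hp
  have hφp : ContDiffAt ℝ 2 φ p := hφ.contDiffAt (hD.mem_nhds hp)
  have hu : DifferentiableAt ℝ (pdx φ) p := hφp.hasFDerivAt_pdx.differentiableAt
  have hv : DifferentiableAt ℝ (pdy φ) p := hφp.hasFDerivAt_pdy.differentiableAt
  have hψx : pdx ψ =ᶠ[𝓝 p] fun q => -pdy φ q / √(pdx φ q ^ 2 + pdy φ q ^ 2 + 1) :=
    eventually_of_mem (hD.mem_nhds hp) hdx
  have hψy : pdy ψ =ᶠ[𝓝 p] fun q => pdx φ q / √(pdx φ q ^ 2 + pdy φ q ^ 2 + 1) :=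
    eventually_of_mem (hD.mem_nhds hp) hdy
  have hW : √(pdx φ p ^ 2 + pdy φ p ^ 2 + 1) ^ 2 = pdx φ p ^ 2 + pdy φ p ^ 2 + 1 :=
    Real.sq_sqrt (by positivity)
  rw [hψx.pdx_eq, hψx.pdy_eq, hψy.pdy_eq, hdx p hp, hdy p hp,
    pdx_div_sqrt_sq_add_sq_add_one hv.fun_neg hu hv,
    pdy_div_sqrt_sq_add_sq_add_one hv.fun_neg hu hv,
    pdy_div_sqrt_sq_add_sq_add_one hu hu hv, pdx_neg, pdy_neg, hφp.pdx_pdy_comm,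
    zmc_expr_eq_mul_mse_expr hW, hmin p hp, one_sub_sq_div_sub_sq_div hW]
  exact ⟨by simp, rfl, by positivity⟩

theorem stmt_4 (D : Set (ℝ × ℝ)) (hD : IsOpen D) (φ ψ : ℝ × ℝ → ℝ)
    (hφ : ContDiffOn ℝ 2 φ D) (hψ : ContDiffOn ℝ 2 ψ D)
    (hmin : ∀ p ∈ D,
      (1 + (pdy φ p) ^ 2) * pdx (pdx φ) p
        - 2 * pdx φ p * pdy φ p * pdy (pdx φ) p
        + (1 + (pdx φ p) ^ 2) * pdy (pdy φ) p = 0)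
    (hdx : ∀ p ∈ D, pdx ψ p = -(pdy φ p) / Real.sqrt ((pdx φ p) ^ 2 + (pdy φ p) ^ 2 + 1))
    (hdy : ∀ p ∈ D, pdy ψ p = pdx φ p / Real.sqrt ((pdx φ p) ^ 2 + (pdy φ p) ^ 2 + 1)) :
    ∀ p ∈ D,
      ((1 - (pdy ψ p) ^ 2) * pdx (pdx ψ) p
        + 2 * pdx ψ p * pdy ψ p * pdy (pdx ψ) p
        + (1 - (pdx ψ p) ^ 2) * pdy (pdy ψ) p = 0) ∧
      (1 - (pdx ψ p) ^ 2 - (pdy ψ p) ^ 2 = 1 / ((pdx φ p) ^ 2 + (pdy φ p) ^ 2 + 1)) ∧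
      (0 < 1 - (pdx ψ p) ^ 2 - (pdy ψ p) ^ 2) :=
  stmt_4_general D hD φ ψ hφ hmin hdx hdy
end

section
/- The function φ(x,y) := y + log(tan x), defined on the strip D = {(x,y) : 0 < x < π/2}, satisfies the time-like ZMC equation (1 − φ_y²)φ_xx + 2φ_xφ_yφ_xy + (1 − φ_x²)φ_yy = 0 on D, and satisfies 1 − φ_x² − φ_y² < 0 everywhere on D (all points are time-like). -/
/-!
For any graph `t = y + f x` one has `φ_y ≡ 1` and `φ_x = f'(x)` independent of `y`, so
`φ_xy = φ_yy = 0` and every term of the ZMC expression vanishes; the surface is time-like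
exactly where `1 - f'(x)² - 1 = -f'(x)²` is negative, i.e. where `f' ≠ 0`. For
`f = log ∘ tan` one has `f' = 1 / (cos² x · tan x) > 0` on `(0, π/2)`.
-/

theorem pdy_comp_fst (g : ℝ → ℝ) : pdy (fun p => g p.1) = 0 := by
  ext p
  simp [pdy]

theorem pdx_snd_add_comp_fst (f : ℝ → ℝ) :
    pdx (fun p => p.2 + f p.1) = fun p => deriv f p.1 := by
  ext p
  simp [pdx, deriv_const_add]

theorem pdy_snd_add_comp_fst (f : ℝ → ℝ) : pdy (fun p => p.2 + f p.1) = fun _ => 1 := by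
  ext p
  simp [pdy]

theorem deriv_log_tan_pos {x : ℝ} (h0 : 0 < x) (hπ : x < Real.pi / 2) :
    0 < deriv (fun t => Real.log (Real.tan t)) x := by
  have htan : 0 < Real.tan x := Real.tan_pos_of_pos_of_lt_pi_div_two h0 hπ
  have hcos : 0 < Real.cos x := Real.cos_pos_of_mem_Ioo ⟨by linarith [Real.pi_pos], hπ⟩
  rw [((Real.hasDerivAt_tan hcos.ne').log htan.ne').deriv]
  positivity

theorem stmt_6 :
    let φ : ℝ × ℝ → ℝ := fun p => p.2 + Real.log (Real.tan p.1)
    let D : Set (ℝ × ℝ) := {p | 0 < p.1 ∧ p.1 < Real.pi / 2}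
    ∀ p ∈ D,
      ((1 - (pdy φ p) ^ 2) * pdx (pdx φ) p
        + 2 * pdx φ p * pdy φ p * pdy (pdx φ) p
        + (1 - (pdx φ p) ^ 2) * pdy (pdy φ) p = 0) ∧
      (1 - (pdx φ p) ^ 2 - (pdy φ p) ^ 2 < 0) := by
  intro φ D p ⟨h0, hπ⟩
  have hx : pdx φ = fun p => deriv (fun t => Real.log (Real.tan t)) p.1 :=
    pdx_snd_add_comp_fst fun t => Real.log (Real.tan t)
  have hy : pdy φ = fun _ => 1 := pdy_snd_add_comp_fst fun t => Real.log (Real.tan t)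
  have hxy : pdy (pdx φ) = 0 := hx ▸ pdy_comp_fst _
  have hyy : pdy (pdy φ) = 0 := hy ▸ pdy_comp_fst fun _ => 1
  have hpos := deriv_log_tan_pos h0 hπ
  rw [hxy, hyy, hx, hy, Pi.zero_apply]
  exact ⟨by ring, by linarith [pow_pos hpos 2]⟩
end

section
/- Let a > 0 and let Ψ(x,y,t) := a·sinh(at)·((x−t)² + y²) + 2(x−t)·cosh(at). Then the gradient (Ψ_x, Ψ_y, Ψ_t) never vanishes at any point (x,y,t) ∈ ℝ³ with Ψ(x,y,t) = 0; consequently the zero set {Ψ = 0} is a C^∞ embedded surface in ℝ³. -/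
/-- Partial derivatives of a function on ℝ³ = ℝ × ℝ × ℝ. -/
noncomputable def pd1 (f : ℝ × ℝ × ℝ → ℝ) (p : ℝ × ℝ × ℝ) : ℝ :=
  deriv (fun s => f (s, p.2.1, p.2.2)) p.1
noncomputable def pd2 (f : ℝ × ℝ × ℝ → ℝ) (p : ℝ × ℝ × ℝ) : ℝ :=
  deriv (fun s => f (p.1, s, p.2.2)) p.2.1
noncomputable def pd3 (f : ℝ × ℝ × ℝ → ℝ) (p : ℝ × ℝ × ℝ) : ℝ :=
  deriv (fun s => f (p.1, p.2.1, s)) p.2.2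

/-!
With `u = x - t`, `b = a sinh(at)` and `c = cosh(at)` we have `Ψ = b (u² + y²) + 2 u c`,
`Ψ_x = 2 b u + 2 c` and `Ψ_y = 2 b y`. At a common zero of these three, either `b = 0` or
`y = 0`, and in both cases `c = 0` follows, which is impossible since `cosh > 0`.
-/

open Real

noncomputable def zmcPotential (a : ℝ) (p : ℝ × ℝ × ℝ) : ℝ :=
  a * sinh (a * p.2.2) * ((p.1 - p.2.2) ^ 2 + p.2.1 ^ 2) + 2 * (p.1 - p.2.2) * cosh (a * p.2.2)

theorem eq_zero_of_singular_circle {b c u y : ℝ} (h : b * (u ^ 2 + y ^ 2) + 2 * u * c = 0)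
    (hu : b * (2 * u) + 2 * c = 0) (hy : b * (2 * y) = 0) : c = 0 := by
  rcases mul_eq_zero.mp hy with hb | hy
  · subst hb
    linarith
  · obtain rfl : y = 0 := by linarith
    have huc : u * c = 0 := by linear_combination (2 * h - u * hu) / 2
    rcases mul_eq_zero.mp huc with rfl | hc
    · linarith
    · exact hc

theorem pd1_zmcPotential (a : ℝ) (p : ℝ × ℝ × ℝ) :
    pd1 (zmcPotential a) p = a * sinh (a * p.2.2) * (2 * (p.1 - p.2.2)) + 2 * cosh (a * p.2.2) := by
  have hsq : HasDerivAt (fun s : ℝ => (s - p.2.2) ^ 2 + p.2.1 ^ 2) (2 * (p.1 - p.2.2)) p.1 := by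
    simpa using (((hasDerivAt_id p.1).sub_const p.2.2).pow 2).add_const (p.2.1 ^ 2)
  have hlin : HasDerivAt (fun s : ℝ => 2 * (s - p.2.2) * cosh (a * p.2.2))
      (2 * cosh (a * p.2.2)) p.1 := by
    simpa using (((hasDerivAt_id p.1).sub_const p.2.2).const_mul 2).mul_const (cosh (a * p.2.2))
  exact ((hsq.const_mul (a * sinh (a * p.2.2))).add hlin).deriv

theorem pd2_zmcPotential (a : ℝ) (p : ℝ × ℝ × ℝ) :
    pd2 (zmcPotential a) p = a * sinh (a * p.2.2) * (2 * p.2.1) := by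
  have hsq : HasDerivAt (fun s : ℝ => (p.1 - p.2.2) ^ 2 + s ^ 2) (2 * p.2.1) p.2.1 := by
    simpa [mul_comm] using ((hasDerivAt_id p.2.1).pow 2).const_add ((p.1 - p.2.2) ^ 2)
  exact ((hsq.const_mul (a * sinh (a * p.2.2))).add_const
    (2 * (p.1 - p.2.2) * cosh (a * p.2.2))).deriv

theorem stmt_15_general (a : ℝ) :
    let Ψ : ℝ × ℝ × ℝ → ℝ := fun p =>
      a * Real.sinh (a * p.2.2) * ((p.1 - p.2.2) ^ 2 + p.2.1 ^ 2)
        + 2 * (p.1 - p.2.2) * Real.cosh (a * p.2.2)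
    ∀ p : ℝ × ℝ × ℝ, Ψ p = 0 → (pd1 Ψ p, pd2 Ψ p, pd3 Ψ p) ≠ 0 := by
  intro Ψ p hΨ hgrad
  have hx : pd1 (zmcPotential a) p = 0 := congrArg Prod.fst hgrad
  have hy : pd2 (zmcPotential a) p = 0 := congrArg (fun q : ℝ × ℝ × ℝ => q.2.1) hgrad
  rw [pd1_zmcPotential] at hx
  rw [pd2_zmcPotential] at hy
  exact (cosh_pos (a * p.2.2)).ne' (eq_zero_of_singular_circle hΨ hx hy)

theorem stmt_15 (a : ℝ) (ha : 0 < a) :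
    let Ψ : ℝ × ℝ × ℝ → ℝ := fun p =>
      a * Real.sinh (a * p.2.2) * ((p.1 - p.2.2) ^ 2 + p.2.1 ^ 2)
        + 2 * (p.1 - p.2.2) * Real.cosh (a * p.2.2)
    ∀ p : ℝ × ℝ × ℝ, Ψ p = 0 → (pd1 Ψ p, pd2 Ψ p, pd3 Ψ p) ≠ 0 :=
  stmt_15_general a
end
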